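/- arXiv:2312.10883 — 5 statements merged into one kernel-verified Lean document; each statement's English description precedes it below -/
import Mathlib

section
/- Let Y_N be F_N-measurable and g = {g_n} a sequence of F_{n-1}⊗B(R^d)-measurable functions g_n: Ω × R^d → R. Then there exist a unique adapted process {Y_n}_{n=0,...,N-1} and a unique R^d-valued predictable process {Z_n}_{n=1,...,N} such that Y_n - Y_{n-1} = -g_n(Z_n) + Z_n^T ΔX_n for n = 1,...,N. -/
open scoped Classical BigOperators
open Matrix

noncomputable section

/-- Path space: `N` steps, each increment indexed by `Fin (d+1)` (the increment at
step `n` being `v_{ω n}`). -/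
abbrev PathSp (N d : ℕ) := Fin N → Fin (d + 1)

/-- Two paths agree on the first `n` coordinates. -/
def agreeOn {N d : ℕ} (n : ℕ) (ω ω' : PathSp N d) : Prop :=
  ∀ k : Fin N, (k : ℕ) < n → ω k = ω' k

/-- A function of the path is `F_n`-measurable: it depends only on the first `n`
coordinates. -/
def MeasUpTo {N d : ℕ} {α : Type*} (n : ℕ) (f : PathSp N d → α) : Prop :=
  ∀ ω ω', agreeOn n ω ω' → f ω = f ω'

/-- Sum of `P ω' * f ω'` over the `F_n`-cylinder of `ω`. -/
def cylSum {N d : ℕ} (P : PathSp N d → ℝ) (n : ℕ) (f : PathSp N d → ℝ)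
    (ω : PathSp N d) : ℝ :=
  ∑ ω' : PathSp N d, if agreeOn n ω ω' then P ω' * f ω' else 0

/-- Elementary conditional expectation of `f` given the first `n` coordinates,
under the probability mass function `P`. -/
def cExp {N d : ℕ} (P : PathSp N d → ℝ) (n : ℕ) (f : PathSp N d → ℝ)
    (ω : PathSp N d) : ℝ :=
  cylSum P n f ω / cylSum P n (fun _ => 1) ω

/-!
Since `∑ j, w j = 0` and the `w j` span `ℝ^d`, every function `f` on the `d + 1` successor
states is uniquely of the form `f j = c + z ⬝ᵥ w j`. Applied to `Y_{n+1}` on the successors of a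
node at time `n`, the equation forces `Z_n = z` and `Y_n = c + g_n(z)` (as `Y_n`, `Z_n` and `g_n`
are `F_n`-measurable), and conversely these choices satisfy it; so the solution is built, and shown
unique, by backward induction from `Y_N`. Uniqueness of `(c, z)` is injectivity of a linear map
`ℝ × ℝ^d → ℝ^(d+1)`, which gives existence by counting dimensions.
-/

section AffineRepresentation

variable {ι κ : Type*} [Fintype κ]

def affineEval (w : ι → κ → ℝ) : ℝ × (κ → ℝ) →ₗ[ℝ] ι → ℝ :=
  (LinearMap.toSpanSingleton ℝ _ 1).coprod (Matrix.of w).mulVecLin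

theorem affineEval_apply (w : ι → κ → ℝ) (cz : ℝ × (κ → ℝ)) (j : ι) :
    affineEval w cz j = cz.1 + cz.2 ⬝ᵥ w j := by
  simp [affineEval, mulVec, dotProduct_comm]

theorem affineEval_injective [Fintype ι] [Nonempty ι] {w : ι → κ → ℝ} (hsum : ∑ j, w j = 0)
    (hspan : Submodule.span ℝ (Set.range w) = ⊤) : Function.Injective (affineEval w) := by
  rw [← LinearMap.ker_eq_bot, LinearMap.ker_eq_bot']
  rintro ⟨c, z⟩ h
  have hj : ∀ j, c + z ⬝ᵥ w j = 0 := fun j => by simpa [affineEval_apply] using congrFun h j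
  have hc : c = 0 := by
    have hsum' : ∑ j, (c + z ⬝ᵥ w j) = 0 := Finset.sum_eq_zero fun j _ => hj j
    rw [Finset.sum_add_distrib, ← dotProduct_sum, hsum, dotProduct_zero, add_zero,
      Finset.sum_const, nsmul_eq_mul] at hsum'
    exact (mul_eq_zero.1 hsum').resolve_left (by simp)
  have hz : ∀ u, z ⬝ᵥ u = 0 := by
    intro u
    have hu : u ∈ Submodule.span ℝ (Set.range w) := hspan ▸ Submodule.mem_top
    induction hu using Submodule.span_induction with
    | mem _ hx => obtain ⟨j, rfl⟩ := hx; simpa [hc] using hj j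
    | zero => exact dotProduct_zero z
    | add _ _ _ _ hx hy => rw [dotProduct_add, hx, hy, add_zero]
    | smul a _ _ hx => rw [dotProduct_smul, hx, smul_zero]
  simp [hc, dotProduct_self_eq_zero.1 (hz z)]

theorem affineEval_bijective [Fintype ι] {w : ι → κ → ℝ}
    (hcard : Fintype.card ι = Fintype.card κ + 1) (hsum : ∑ j, w j = 0)
    (hspan : Submodule.span ℝ (Set.range w) = ⊤) :
    Function.Bijective (affineEval w) := by
  have : Nonempty ι := Fintype.card_pos_iff.1 (by omega)
  have hinj := affineEval_injective hsum hspan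
  refine ⟨hinj, (LinearMap.injective_iff_surjective_of_finrank_eq_finrank ?_).1 hinj⟩
  simp [Module.finrank_prod, hcard, add_comm]

end AffineRepresentation

section PathSpace

variable {N d : ℕ}

theorem agreeOn_update_self (n : Fin N) (ω : PathSp N d) (i : Fin (d + 1)) :
    agreeOn n (Function.update ω n i) ω :=
  fun _ hk => Function.update_of_ne (Fin.ne_of_lt hk) i ω

theorem agreeOn.update {n : Fin N} {ω ω' : PathSp N d} (h : agreeOn n ω ω') (i : Fin (d + 1)) :
    agreeOn (n + 1) (Function.update ω n i) (Function.update ω' n i) := by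
  intro k hk
  rcases eq_or_ne k n with rfl | hkn
  · simp
  · rw [Function.update_of_ne hkn, Function.update_of_ne hkn]
    exact h k (by omega)

theorem measUpTo_of_le {α : Type*} {n : ℕ} (hn : N ≤ n) (f : PathSp N d → α) : MeasUpTo n f :=
  fun ω ω' h => congrArg f (funext fun k => h k (by omega))

end PathSpace

section Backward

variable {N d : ℕ} {w : Fin (d + 1) → Fin d → ℝ} (hw : Function.Bijective (affineEval w))

/-- Expanding `Y` on the successors of `ω` at time `n` as `c + z ⬝ᵥ w i` gives `Z_n = z` and
`Y_n = c + g_n(z)`. -/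
def bsdeStep (n : Fin N) (gn : PathSp N d → (Fin d → ℝ) → ℝ) (Y : PathSp N d → ℝ)
    (ω : PathSp N d) : ℝ × (Fin d → ℝ) :=
  let cz := (Equiv.ofBijective _ hw).symm fun i => Y (Function.update ω n i)
  (cz.1 + gn ω cz.2, cz.2)

variable (n : Fin N) (gn : PathSp N d → (Fin d → ℝ) → ℝ) (Y : PathSp N d → ℝ)

theorem bsdeStep_update (ω : PathSp N d) (i : Fin (d + 1)) :
    Y (Function.update ω n i) = (bsdeStep hw n gn Y ω).1 - gn ω (bsdeStep hw n gn Y ω).2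
      + (bsdeStep hw n gn Y ω).2 ⬝ᵥ w i := by
  have h := congrFun (Equiv.ofBijective_apply_symm_apply _ hw
    fun i => Y (Function.update ω n i)) i
  rw [affineEval_apply] at h
  simp only [bsdeStep, add_sub_cancel_right]
  exact h.symm

theorem bsdeStep_sub (ω : PathSp N d) :
    Y ω - (bsdeStep hw n gn Y ω).1 = -gn ω (bsdeStep hw n gn Y ω).2
      + (bsdeStep hw n gn Y ω).2 ⬝ᵥ w (ω n) := by
  rw [← Function.update_eq_self n ω, bsdeStep_update hw n gn Y, Function.update_eq_self]
  ring

variable {n gn Y}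

theorem measUpTo_bsdeStep (hY : MeasUpTo (n + 1) Y) (hgn : ∀ z, MeasUpTo n fun ω => gn ω z) :
    MeasUpTo n (bsdeStep hw n gn Y) := by
  intro ω ω' h
  have hsucc : (fun i => Y (Function.update ω n i)) = fun i => Y (Function.update ω' n i) :=
    funext fun i => hY _ _ (h.update i)
  simp only [bsdeStep, hsucc, hgn _ ω ω' h]

theorem bsdeStep_unique {y : PathSp N d → ℝ} {z : PathSp N d → Fin d → ℝ}
    (hy : MeasUpTo n y) (hz : MeasUpTo n z) (hgn : ∀ z, MeasUpTo n fun ω => gn ω z)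
    (heq : ∀ ω, Y ω - y ω = -gn ω (z ω) + z ω ⬝ᵥ w (ω n)) (ω : PathSp N d) :
    bsdeStep hw n gn Y ω = (y ω, z ω) := by
  have hrep : (fun i => Y (Function.update ω n i)) = affineEval w (y ω - gn ω (z ω), z ω) := by
    funext i
    have hω := agreeOn_update_self n ω i
    have h := heq (Function.update ω n i)
    have hg : gn (Function.update ω n i) (z ω) = gn ω (z ω) := hgn _ _ _ hω
    rw [hy _ _ hω, hz _ _ hω, hg, Function.update_self] at h
    rw [affineEval_apply]
    linarith
  simp only [bsdeStep, hrep, Equiv.ofBijective_symm_apply_apply, sub_add_cancel]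

variable (w) in
def IsBSDESolution (g : Fin N → PathSp N d → (Fin d → ℝ) → ℝ) (Yterm : PathSp N d → ℝ)
    (Y : Fin (N + 1) → PathSp N d → ℝ) (Z : Fin N → PathSp N d → Fin d → ℝ) : Prop :=
  (∀ n : Fin (N + 1), MeasUpTo n (Y n)) ∧ (∀ n : Fin N, MeasUpTo n (Z n)) ∧
    Y (Fin.last N) = Yterm ∧
    ∀ n ω, Y n.succ ω - Y n.castSucc ω = -g n ω (Z n ω) + Z n ω ⬝ᵥ w (ω n)

variable (g : Fin N → PathSp N d → (Fin d → ℝ) → ℝ) (Yterm : PathSp N d → ℝ)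

def bsdeY : Fin (N + 1) → PathSp N d → ℝ :=
  Fin.reverseInduction Yterm fun n Y ω => (bsdeStep hw n (g n) Y ω).1

def bsdeZ (n : Fin N) (ω : PathSp N d) : Fin d → ℝ :=
  (bsdeStep hw n (g n) (bsdeY hw g Yterm n.succ) ω).2

theorem bsdeY_last : bsdeY hw g Yterm (Fin.last N) = Yterm :=
  Fin.reverseInduction_last

theorem bsdeY_castSucc (n : Fin N) (ω : PathSp N d) :
    bsdeY hw g Yterm n.castSucc ω = (bsdeStep hw n (g n) (bsdeY hw g Yterm n.succ) ω).1 := by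
  rw [bsdeY, Fin.reverseInduction_castSucc]
  rfl

variable {g}
variable (hg : ∀ (n : Fin N) (z : Fin d → ℝ), MeasUpTo n fun ω => g n ω z)
include hg

theorem measUpTo_bsdeY (n : Fin (N + 1)) : MeasUpTo n (bsdeY hw g Yterm n) := by
  induction n using Fin.reverseInduction with
  | last => exact measUpTo_of_le le_rfl _
  | cast n ih =>
    intro ω ω' h
    simp only [bsdeY_castSucc, measUpTo_bsdeStep hw ih (hg n) ω ω' h]

theorem isBSDESolution_bsde : IsBSDESolution w g Yterm (bsdeY hw g Yterm) (bsdeZ hw g Yterm) :=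
  ⟨measUpTo_bsdeY hw Yterm hg,
    fun n ω ω' h => congrArg Prod.snd
      (measUpTo_bsdeStep hw (measUpTo_bsdeY hw Yterm hg n.succ) (hg n) ω ω' h),
    bsdeY_last hw g Yterm,
    fun n ω => by rw [bsdeY_castSucc]; exact bsdeStep_sub hw n (g n) _ ω⟩

theorem IsBSDESolution.eq_bsde {Y : Fin (N + 1) → PathSp N d → ℝ}
    {Z : Fin N → PathSp N d → Fin d → ℝ} (h : IsBSDESolution w g Yterm Y Z) :
    Y = bsdeY hw g Yterm ∧ Z = bsdeZ hw g Yterm := by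
  obtain ⟨hY, hZ, hlast, heq⟩ := h
  have hstep : ∀ n : Fin N, Y n.succ = bsdeY hw g Yterm n.succ →
      ∀ ω, bsdeStep hw n (g n) (bsdeY hw g Yterm n.succ) ω = (Y n.castSucc ω, Z n ω) := by
    intro n hn
    refine bsdeStep_unique hw (hY n.castSucc) (hZ n) (hg n) fun ω => ?_
    rw [← hn]
    exact heq n ω
  have hYeq : Y = bsdeY hw g Yterm := by
    funext n
    induction n using Fin.reverseInduction with
    | last => rw [hlast, bsdeY_last]
    | cast n ih =>
      funext ω
      rw [bsdeY_castSucc, hstep n ih ω]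
  refine ⟨hYeq, funext fun n => funext fun ω => ?_⟩
  rw [bsdeZ, hstep n (congrFun hYeq _) ω]

end Backward

theorem stmt7_general (N d : ℕ) (v : Fin d → (Fin d → ℝ))
    (hspan : Submodule.span ℝ (Set.range v) = ⊤)
    (w : Fin (d + 1) → (Fin d → ℝ))
    (hw0 : w 0 = -(∑ k, v k)) (hws : ∀ k : Fin d, w k.succ = v k)
    (g : Fin N → PathSp N d → (Fin d → ℝ) → ℝ)
    (hg : ∀ (n : Fin N) (z : Fin d → ℝ), MeasUpTo (n : ℕ) (fun ω => g n ω z))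
    (Yterm : PathSp N d → ℝ) :
    ∃! YZ : (Fin (N + 1) → PathSp N d → ℝ) × (Fin N → PathSp N d → (Fin d → ℝ)),
      (∀ n : Fin (N + 1), MeasUpTo (n : ℕ) (YZ.1 n)) ∧
      (∀ n : Fin N, MeasUpTo (n : ℕ) (YZ.2 n)) ∧
      YZ.1 (Fin.last N) = Yterm ∧
      ∀ (n : Fin N) (ω : PathSp N d),
        YZ.1 n.succ ω - YZ.1 n.castSucc ω
          = -(g n ω (YZ.2 n ω)) + ∑ k, YZ.2 n ω k * w (ω n) k := by
  have hwsum : ∑ j, w j = 0 := by simp [Fin.sum_univ_succ, hw0, hws]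
  have hwspan : Submodule.span ℝ (Set.range w) = ⊤ :=
    top_le_iff.1 (hspan ▸ Submodule.span_mono (Set.range_subset_iff.2 fun k => ⟨k.succ, hws k⟩))
  have hw : Function.Bijective (affineEval w) := affineEval_bijective (by simp) hwsum hwspan
  exact ⟨(bsdeY hw g Yterm, bsdeZ hw g Yterm), isBSDESolution_bsde hw Yterm hg,
    fun _ h => Prod.ext_iff.2 (IsBSDESolution.eq_bsde hw Yterm hg h)⟩

/-- existence and uniqueness of the BSΔE solution: given an
`F_N`-measurable terminal value and drivers `g_n` that are `F_{n-1}`-measurable,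
there is a unique adapted `{Y_n}` and predictable `{Z_n}` with
`ΔY_n = -g_n(Z_n) + Z_nᵀ ΔX_n` and `Y_N` the given terminal value. -/
theorem stmt7 (N d : ℕ) (v : Fin d → (Fin d → ℝ)) (hv : LinearIndependent ℝ v)
    (hspan : Submodule.span ℝ (Set.range v) = ⊤)
    (w : Fin (d + 1) → (Fin d → ℝ))
    (hw0 : w 0 = -(∑ k, v k)) (hws : ∀ k : Fin d, w k.succ = v k)
    (g : Fin N → PathSp N d → (Fin d → ℝ) → ℝ)
    (hg : ∀ (n : Fin N) (z : Fin d → ℝ), MeasUpTo (n : ℕ) (fun ω => g n ω z))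
    (Yterm : PathSp N d → ℝ) :
    ∃! YZ : (Fin (N + 1) → PathSp N d → ℝ) × (Fin N → PathSp N d → (Fin d → ℝ)),
      (∀ n : Fin (N + 1), MeasUpTo (n : ℕ) (YZ.1 n)) ∧
      (∀ n : Fin N, MeasUpTo (n : ℕ) (YZ.2 n)) ∧
      YZ.1 (Fin.last N) = Yterm ∧
      ∀ (n : Fin N) (ω : PathSp N d),
        YZ.1 n.succ ω - YZ.1 n.castSucc ω
          = -(g n ω (YZ.2 n ω)) + ∑ k, YZ.2 n ω k * w (ω n) k :=
  stmt7_general N d v hspan w hw0 hws g hg Yterm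
end
end

section
/- With g_n(z) = -(1/γ) log( Σ_{j=0}^d e^{-γ z^T v_j} P̂_{n,j} ) for a constant γ > 0 and a Δ_d-valued predictable process {P̂_n}, the solution of the BSΔE ΔY_n = -g_n(Z_n) + Z_n^T ΔX_n with terminal condition Y, satisfies Y_n = -(1/γ) log Ê[ e^{-γ Y} | F_n ] for n = 0,...,N, where Ê is expectation under the measure P̂ associated with {P̂_n}. -/
open scoped Classical BigOperators
open Matrix

noncomputable section

/-!
Under `P̂` the path mass of an `F_n`-cylinder factors as the product of the first `n`
transition weights, so a conditional expectation given `F_n` is obtained by averaging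
over the next increment with weights `P̂_{n,j}`, one step at a time. Hence a process `M`
with `Σ_j M_{n+1}(ω with step n set to j) P̂_{n,j} = M_n` equals `Ê[M_N | F_n]`.
For `M_n = e^{-γ Y_n}` this one-step identity is exactly the BSΔE with the entropic
driver: `e^{γ g_n(z)}` is the normaliser `(Σ_j e^{-γ zᵀ v_j} P̂_{n,j})⁻¹`.
-/

section Entropic

variable {ι : Type*} [Fintype ι]

def entropicCertEquiv (γ : ℝ) (p a : ι → ℝ) : ℝ :=
  -(1 / γ) * Real.log (∑ j, Real.exp (-(γ * a j)) * p j)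

theorem exp_neg_mul_entropicCertEquiv {γ : ℝ} (hγ : γ ≠ 0) {p : ι → ℝ}
    (hp : ∀ j, 0 ≤ p j) (hp1 : ∑ j, p j = 1) (a : ι → ℝ) :
    Real.exp (-(γ * entropicCertEquiv γ p a)) = ∑ j, Real.exp (-(γ * a j)) * p j := by
  obtain ⟨j₀, hj₀⟩ : ∃ j, 0 < p j := by
    by_contra! h
    simp [le_antisymm (h _) (hp _)] at hp1
  have hpos : 0 < ∑ j, Real.exp (-(γ * a j)) * p j :=
    Finset.sum_pos' (fun j _ => mul_nonneg (Real.exp_pos _).le (hp j))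
      ⟨j₀, Finset.mem_univ _, mul_pos (Real.exp_pos _) hj₀⟩
  rw [← Real.exp_log hpos, entropicCertEquiv]
  congr 1
  field_simp

theorem sum_exp_neg_mul_sub_entropicCertEquiv_add {γ : ℝ} (hγ : γ ≠ 0) {p : ι → ℝ}
    (hp : ∀ j, 0 ≤ p j) (hp1 : ∑ j, p j = 1) (a : ι → ℝ) (y : ℝ) :
    ∑ j, Real.exp (-(γ * (y - entropicCertEquiv γ p a + a j))) * p j
      = Real.exp (-(γ * y)) := by
  have hce := exp_neg_mul_entropicCertEquiv hγ hp hp1 a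
  have hsplit : ∀ j, Real.exp (-(γ * (y - entropicCertEquiv γ p a + a j)))
      = Real.exp (-(γ * y)) * (Real.exp (-(γ * entropicCertEquiv γ p a)))⁻¹
        * Real.exp (-(γ * a j)) := fun j => by
    rw [← Real.exp_neg, ← Real.exp_add, ← Real.exp_add]
    ring_nf
  simp_rw [hsplit, mul_assoc, ← Finset.mul_sum, ← hce]
  rw [inv_mul_cancel₀ (Real.exp_pos _).ne', mul_one]

end Entropic

section Cylinders

variable {N d : ℕ}

theorem agreeOn_update_of_le {n : ℕ} {i : Fin N} (h : n ≤ i) (j : Fin (d + 1))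
    (ω : PathSp N d) : agreeOn n (Function.update ω i j) ω := fun k hk =>
  Function.update_of_ne (fun hki => by rw [hki] at hk; omega) _ _

theorem agreeOn_update_succ_iff (i : Fin N) (j : Fin (d + 1)) (ω ω' : PathSp N d) :
    agreeOn (i + 1) (Function.update ω i j) ω' ↔ agreeOn i ω ω' ∧ ω' i = j := by
  constructor
  · intro h
    refine ⟨fun k hk => ?_, by simpa using (h i (by omega)).symm⟩
    rw [← h k (by omega), Function.update_of_ne (Fin.ne_of_lt hk)]
  · rintro ⟨h, rfl⟩ k hk
    rcases eq_or_ne k i with rfl | hki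
    · exact Function.update_self _ _ _
    · rw [Function.update_of_ne hki]
      exact h k (by have := Fin.val_ne_of_ne hki; omega)

theorem agreeOn_self_iff (ω ω' : PathSp N d) : agreeOn N ω ω' ↔ ω' = ω :=
  ⟨fun h => funext fun k => (h k k.isLt).symm, fun h k _ => by rw [h]⟩

theorem cylSum_eq_sum_update (P f : PathSp N d → ℝ) (i : Fin N) (ω : PathSp N d) :
    cylSum P i f ω = ∑ j, cylSum P (i + 1) f (Function.update ω i j) := by
  unfold cylSum
  rw [Finset.sum_comm]
  refine Finset.sum_congr rfl fun ω' _ => ?_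
  by_cases h : agreeOn i ω ω' <;> simp [agreeOn_update_succ_iff, h]

theorem cylSum_self (P f : PathSp N d → ℝ) (ω : PathSp N d) :
    cylSum P N f ω = P ω * f ω := by
  simp [cylSum, agreeOn_self_iff]

end Cylinders

section PathMeasure

variable {N d : ℕ} {Phat : Fin N → PathSp N d → Fin (d + 1) → ℝ} {Pm : PathSp N d → ℝ}

def cylinderMass (Phat : Fin N → PathSp N d → Fin (d + 1) → ℝ) (n : ℕ)
    (ω : PathSp N d) : ℝ :=
  ∏ k ∈ Finset.univ.filter (fun k : Fin N => (k : ℕ) < n), Phat k ω (ω k)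

theorem cylinderMass_update_succ (hpred : ∀ n : Fin N, MeasUpTo (n : ℕ) (Phat n))
    (i : Fin N) (j : Fin (d + 1)) (ω : PathSp N d) :
    cylinderMass Phat (i + 1) (Function.update ω i j) = Phat i ω j * cylinderMass Phat i ω := by
  have hfilter : Finset.univ.filter (fun k : Fin N => (k : ℕ) < i + 1)
      = insert i (Finset.univ.filter (fun k : Fin N => (k : ℕ) < i)) := by
    ext k
    simp [le_iff_eq_or_lt, Fin.val_inj]
  rw [cylinderMass, hfilter, Finset.prod_insert (by simp), Function.update_self,
    hpred i _ _ (agreeOn_update_of_le le_rfl j ω)]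
  congr 1
  refine Finset.prod_congr rfl fun k hk => ?_
  have hk : (k : ℕ) < i := (Finset.mem_filter.mp hk).2
  rw [hpred k _ _ (agreeOn_update_of_le hk.le j ω), Function.update_of_ne (Fin.ne_of_lt hk)]

theorem cylSum_one_eq_cylinderMass (hpred : ∀ n : Fin N, MeasUpTo (n : ℕ) (Phat n))
    (hsum : ∀ n ω, ∑ j, Phat n ω j = 1) (hPm : ∀ ω, Pm ω = ∏ n, Phat n ω (ω n)) :
    ∀ (n : Fin (N + 1)) (ω : PathSp N d),
      cylSum Pm n (fun _ => 1) ω = cylinderMass Phat n ω := by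
  refine Fin.reverseInduction (fun ω => ?_) (fun i ih ω => ?_)
  · simp [cylSum_self, hPm, cylinderMass]
  · simp only [Fin.val_succ] at ih
    simp only [Fin.val_castSucc, cylSum_eq_sum_update _ _ i, ih, cylinderMass_update_succ hpred,
      ← Finset.sum_mul, hsum, one_mul]

theorem cylSum_one_update_succ (hpred : ∀ n : Fin N, MeasUpTo (n : ℕ) (Phat n))
    (hsum : ∀ n ω, ∑ j, Phat n ω j = 1) (hPm : ∀ ω, Pm ω = ∏ n, Phat n ω (ω n))
    (i : Fin N) (j : Fin (d + 1)) (ω : PathSp N d) :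
    cylSum Pm (i + 1) (fun _ => 1) (Function.update ω i j)
      = Phat i ω j * cylSum Pm i (fun _ => 1) ω := by
  have h := cylSum_one_eq_cylinderMass hpred hsum hPm
  have hsucc := h i.succ (Function.update ω i j)
  have hcast := h i.castSucc ω
  simp only [Fin.val_succ, Fin.val_castSucc] at hsucc hcast
  rw [hsucc, hcast, cylinderMass_update_succ hpred]

theorem cylSum_eq_mul_cylSum_one_of_step (hpred : ∀ n : Fin N, MeasUpTo (n : ℕ) (Phat n))
    (hsum : ∀ n ω, ∑ j, Phat n ω j = 1) (hPm : ∀ ω, Pm ω = ∏ n, Phat n ω (ω n))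
    (M : Fin (N + 1) → PathSp N d → ℝ)
    (hstep : ∀ i ω, ∑ j, M i.succ (Function.update ω i j) * Phat i ω j = M i.castSucc ω) :
    ∀ (n : Fin (N + 1)) (ω : PathSp N d),
      cylSum Pm n (M (Fin.last N)) ω = M n ω * cylSum Pm n (fun _ => 1) ω := by
  refine Fin.reverseInduction (fun ω => ?_) (fun i ih ω => ?_)
  · simp [cylSum_self, mul_comm]
  · simp only [Fin.val_succ] at ih
    rw [Fin.val_castSucc, cylSum_eq_sum_update _ _ i, ← hstep i ω, Finset.sum_mul]
    refine Finset.sum_congr rfl fun j _ => ?_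
    rw [ih, cylSum_one_update_succ hpred hsum hPm, mul_assoc]

theorem cExp_eq_of_step (hpred : ∀ n : Fin N, MeasUpTo (n : ℕ) (Phat n))
    (hsum : ∀ n ω, ∑ j, Phat n ω j = 1) (hPm : ∀ ω, Pm ω = ∏ n, Phat n ω (ω n))
    (M : Fin (N + 1) → PathSp N d → ℝ)
    (hstep : ∀ i ω, ∑ j, M i.succ (Function.update ω i j) * Phat i ω j = M i.castSucc ω)
    (n : Fin (N + 1)) (ω : PathSp N d) (hpos : 0 < cylSum Pm n (fun _ => 1) ω) :
    cExp Pm n (M (Fin.last N)) ω = M n ω := by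
  rw [cExp, cylSum_eq_mul_cylSum_one_of_step hpred hsum hPm M hstep,
    mul_div_cancel_right₀ _ hpos.ne']

end PathMeasure

theorem stmt8_general (N d : ℕ)
    (w : Fin (d + 1) → (Fin d → ℝ))
    (γ : ℝ) (hγ : 0 < γ)
    (Phat : Fin N → PathSp N d → Fin (d + 1) → ℝ)
    (hpred : ∀ n : Fin N, MeasUpTo (n : ℕ) (Phat n))
    (hsimplex : ∀ n ω, (∀ j, 0 ≤ Phat n ω j) ∧ ∑ j, Phat n ω j = 1)
    (g : Fin N → PathSp N d → (Fin d → ℝ) → ℝ)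
    (hgdef : ∀ n ω z, g n ω z
      = -(1 / γ) * Real.log (∑ j, Real.exp (-(γ * ∑ k, z k * w j k)) * Phat n ω j))
    (Pm : PathSp N d → ℝ) (hPm : ∀ ω, Pm ω = ∏ n, Phat n ω (ω n))
    (Yterm : PathSp N d → ℝ)
    (Y : Fin (N + 1) → PathSp N d → ℝ) (Z : Fin N → PathSp N d → (Fin d → ℝ))
    (hYad : ∀ n : Fin (N + 1), MeasUpTo (n : ℕ) (Y n))
    (hZpred : ∀ n : Fin N, MeasUpTo (n : ℕ) (Z n))
    (hterm : Y (Fin.last N) = Yterm)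
    (heq : ∀ (n : Fin N) (ω : PathSp N d),
      Y n.succ ω - Y n.castSucc ω
        = -(g n ω (Z n ω)) + ∑ k, Z n ω k * w (ω n) k) :
    ∀ (n : Fin (N + 1)) (ω : PathSp N d),
      0 < cylSum Pm (n : ℕ) (fun _ => 1) ω →
      Y n ω = -(1 / γ) * Real.log
        (cExp Pm (n : ℕ) (fun ω' => Real.exp (-(γ * Yterm ω'))) ω) := by
  have hsum : ∀ n ω, ∑ j, Phat n ω j = 1 := fun n ω => (hsimplex n ω).2
  have hstep : ∀ i ω, ∑ j, Real.exp (-(γ * Y i.succ (Function.update ω i j))) * Phat i ω j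
      = Real.exp (-(γ * Y i.castSucc ω)) := by
    intro i ω
    have hY : ∀ j, Y i.succ (Function.update ω i j) = Y i.castSucc ω
        - entropicCertEquiv γ (Phat i ω) (fun j => ∑ k, Z i ω k * w j k)
        + ∑ k, Z i ω k * w j k := by
      intro j
      have hag := agreeOn_update_of_le (n := i) le_rfl j ω
      have h := heq i (Function.update ω i j)
      rw [Function.update_self, hYad i.castSucc _ _ hag, hZpred i _ _ hag, hgdef,
        hpred i _ _ hag] at h
      rw [entropicCertEquiv]
      linarith
    simp_rw [hY]
    exact sum_exp_neg_mul_sub_entropicCertEquiv_add hγ.ne' (hsimplex i ω).1 (hsum i ω) _ _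
  intro n ω hpos
  have hce := cExp_eq_of_step hpred hsum hPm (fun n ω => Real.exp (-(γ * Y n ω))) hstep n ω hpos
  rw [hterm] at hce
  rw [hce, Real.log_exp]
  field_simp

/-- with the entropic driver
`g_n(z) = -(1/γ) log Σ_j e^{-γ zᵀ v_j} P̂_{n,j}`, the BSΔE solution is
`Y_n = -(1/γ) log Ê[e^{-γ Y} | F_n]` under the measure `P̂` associated with the
predictable simplex-valued process `{P̂_n}` (whose path mass is `∏_n P̂_{n, ω_n}`),
wherever the conditional expectation is defined. -/
theorem stmt8 (N d : ℕ) (v : Fin d → (Fin d → ℝ)) (hv : LinearIndependent ℝ v)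
    (hspan : Submodule.span ℝ (Set.range v) = ⊤)
    (w : Fin (d + 1) → (Fin d → ℝ))
    (hw0 : w 0 = -(∑ k, v k)) (hws : ∀ k : Fin d, w k.succ = v k)
    (γ : ℝ) (hγ : 0 < γ)
    (Phat : Fin N → PathSp N d → Fin (d + 1) → ℝ)
    (hpred : ∀ n : Fin N, MeasUpTo (n : ℕ) (Phat n))
    (hsimplex : ∀ n ω, (∀ j, 0 ≤ Phat n ω j) ∧ ∑ j, Phat n ω j = 1)
    (g : Fin N → PathSp N d → (Fin d → ℝ) → ℝ)
    (hgdef : ∀ n ω z, g n ω z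
      = -(1 / γ) * Real.log (∑ j, Real.exp (-(γ * ∑ k, z k * w j k)) * Phat n ω j))
    (Pm : PathSp N d → ℝ) (hPm : ∀ ω, Pm ω = ∏ n, Phat n ω (ω n))
    (Yterm : PathSp N d → ℝ)
    (Y : Fin (N + 1) → PathSp N d → ℝ) (Z : Fin N → PathSp N d → (Fin d → ℝ))
    (hYad : ∀ n : Fin (N + 1), MeasUpTo (n : ℕ) (Y n))
    (hZpred : ∀ n : Fin N, MeasUpTo (n : ℕ) (Z n))
    (hterm : Y (Fin.last N) = Yterm)
    (heq : ∀ (n : Fin N) (ω : PathSp N d),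
      Y n.succ ω - Y n.castSucc ω
        = -(g n ω (Z n ω)) + ∑ k, Z n ω k * w (ω n) k) :
    ∀ (n : Fin (N + 1)) (ω : PathSp N d),
      0 < cylSum Pm (n : ℕ) (fun _ => 1) ω →
      Y n ω = -(1 / γ) * Real.log
        (cExp Pm (n : ℕ) (fun ω' => Real.exp (-(γ * Yterm ω'))) ω) :=
  stmt8_general N d w γ hγ Phat hpred hsimplex g hgdef Pm hPm Yterm Y Z hYad hZpred hterm heq
end
end

section
/- (Nonlinear Feynman–Kac) Suppose g_n(z) = f_n(X_{n-1}, z) and Y_N = h(X_N) for deterministic f_n: L × R^d → R and h: L → R. Define u_N = h and backward-inductively u_{n-1}(x) = u_n(x) + L u_n(x) + f_n(x, (v v^T)^{-1} v N u_n(x)), where L u(x) = (1/(d+1)) Σ_{j=0}^d (u(x+v_j) - u(x)) and N u(x) = (u(x+v_0)-u(x), ..., u(x+v_d)-u(x))^T. Then the unique BSΔE solution satisfies Y_n = u_n(X_n) and Z_{n+1} = (v v^T)^{-1} v N u_{n+1}(X_n). -/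
/-!
Backward induction in time. At a node `x = X_n` of the path, vary only the next increment
over the `d + 1` directions `v_j`. As `Y_n` and `Z_{n+1}` are `F_n`-measurable, the BSΔE
says `u_{n+1}(x + v_j) - u_{n+1}(x) = Z·v_j + c` for every `j`, with one scalar `c`.
Since the `v_j` sum to zero, averaging over `j` gives `c = 𝓛 u_{n+1}(x)`, and multiplying
by `v` gives `v 𝓝 u_{n+1}(x) = v vᵀ Z`; and `v vᵀ` is invertible because the `v_j` span `ℝ^d`.
-/

open scoped Classical BigOperators
open Matrix

noncomputable section

/-- The price process `X_n = Σ_{k < n} v_{ω k}` on the lattice. -/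
def Xproc {N d : ℕ} (w : Fin (d + 1) → (Fin d → ℝ)) (n : Fin (N + 1))
    (ω : PathSp N d) : Fin d → ℝ :=
  ∑ k ∈ Finset.univ.filter (fun k : Fin N => (k : ℕ) < (n : ℕ)), w (ω k)

namespace Matrix

variable {R : Type*} [Field R] {m n : Type*} [Fintype m] [Fintype n]

theorem isUnit_det_mul_transpose_of_span_col_eq_top [LinearOrder R] [IsStrictOrderedRing R]
    [DecidableEq m] {A : Matrix m n R} (hA : Submodule.span R (Set.range A.col) = ⊤) :
    IsUnit (A * Aᵀ).det := by
  have hrange : LinearMap.range (A * Aᵀ).mulVecLin = ⊤ := by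
    apply Submodule.eq_top_of_finrank_eq
    rw [← Matrix.rank, rank_self_mul_transpose, rank_eq_finrank_span_cols, hA, finrank_top]
  rw [← isUnit_iff_isUnit_det, ← mulVec_surjective_iff_isUnit]
  exact LinearMap.range_eq_top.1 hrange

variable {A : Matrix m n R} {a : n → R} {z : m → R} {c : R}

theorem sum_eq_card_mul_of_eq_transpose_mulVec_add (hA : A *ᵥ 1 = 0)
    (ha : a = Aᵀ *ᵥ z + c • 1) : ∑ i, a i = Fintype.card n * c := by
  have h1 : (1 : n → R) ⬝ᵥ Aᵀ *ᵥ z = 0 := by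
    rw [dotProduct_mulVec, vecMul_transpose, hA, zero_dotProduct]
  calc ∑ i, a i = 1 ⬝ᵥ a := (one_dotProduct a).symm
    _ = Fintype.card n * c := by simp [ha, dotProduct_add, h1, mul_comm]

theorem eq_inv_mulVec_of_eq_transpose_mulVec_add [DecidableEq m] (hA : A *ᵥ 1 = 0)
    (hdet : IsUnit (A * Aᵀ).det) (ha : a = Aᵀ *ᵥ z + c • 1) :
    z = (A * Aᵀ)⁻¹ *ᵥ (A *ᵥ a) := by
  rw [ha, mulVec_add, mulVec_smul, hA, smul_zero, add_zero, mulVec_mulVec, mulVec_mulVec,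
    Matrix.mul_assoc, nonsing_inv_mul _ hdet, one_mulVec]

end Matrix

section PathSpace

variable {N d : ℕ}

theorem agreeOn_update (n : Fin N) (ω : PathSp N d) (j : Fin (d + 1)) :
    agreeOn n ω (Function.update ω n j) := fun _ hk =>
  (Function.update_of_ne (Fin.ne_of_lt hk) j ω).symm

theorem measUpTo_Xproc (w : Fin (d + 1) → (Fin d → ℝ)) (n : Fin (N + 1)) :
    MeasUpTo (n : ℕ) (Xproc (N := N) w n) := fun ω ω' hωω' =>
  Finset.sum_congr rfl fun k hk => by rw [hωω' k (Finset.mem_filter.1 hk).2]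

theorem Xproc_succ (w : Fin (d + 1) → (Fin d → ℝ)) (n : Fin N) (ω : PathSp N d) :
    Xproc w n.succ ω = Xproc w n.castSucc ω + w (ω n) := by
  have hfilter : Finset.univ.filter (fun k : Fin N => (k : ℕ) < (n.succ : ℕ))
      = insert n (Finset.univ.filter fun k : Fin N => (k : ℕ) < (n.castSucc : ℕ)) := by
    ext k
    simp only [Finset.mem_filter, Finset.mem_univ, true_and, Finset.mem_insert, Fin.val_succ,
      Fin.val_castSucc, Fin.ext_iff]
    omega
  rw [Xproc, hfilter, Finset.sum_insert (by simp), add_comm]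
  rfl

end PathSpace

theorem feynmanKac_backward_step {N d : ℕ} {w : Fin (d + 1) → (Fin d → ℝ)}
    {V : Matrix (Fin d) (Fin (d + 1)) ℝ} (hV : ∀ k i, V k i = w i k) (hV1 : V *ᵥ 1 = 0)
    (hdet : IsUnit (V * Vᵀ).det) (n : Fin N) (F : (Fin d → ℝ) → (Fin d → ℝ) → ℝ)
    (φ ψ : (Fin d → ℝ) → ℝ)
    (hψ : ∀ x, ψ x = φ x + (1 / ((d : ℝ) + 1)) * ∑ j, (φ (x + w j) - φ x)
        + F x ((V * Vᵀ)⁻¹ *ᵥ (V *ᵥ fun j => φ (x + w j) - φ x)))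
    (y y' : PathSp N d → ℝ) (z : PathSp N d → (Fin d → ℝ))
    (hy : MeasUpTo n y) (hz : MeasUpTo n z) (hy' : ∀ ω, y' ω = φ (Xproc w n.succ ω))
    (heq : ∀ ω, y' ω - y ω = -(F (Xproc w n.castSucc ω) (z ω)) + ∑ k, z ω k * w (ω n) k)
    (ω : PathSp N d) :
    z ω = (V * Vᵀ)⁻¹ *ᵥ (V *ᵥ fun j => φ (Xproc w n.castSucc ω + w j)
        - φ (Xproc w n.castSucc ω)) ∧
      y ω = ψ (Xproc w n.castSucc ω) := by
  set x := Xproc w n.castSucc ω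
  have hincrement : ∀ j, φ (x + w j) - y ω = -(F x (z ω)) + ∑ k, z ω k * w j k := by
    intro j
    have hagree := agreeOn_update n ω j
    simpa [hy', Xproc_succ, ← measUpTo_Xproc w n.castSucc _ _ hagree, ← hy _ _ hagree,
      ← hz _ _ hagree] using heq (Function.update ω n j)
  have ha : (fun j => φ (x + w j) - φ x) = Vᵀ *ᵥ z ω + (y ω - φ x - F x (z ω)) • 1 := by
    funext j
    simp only [Pi.add_apply, Pi.smul_apply, Pi.one_apply, smul_eq_mul, mul_one, mulVec,
      dotProduct, transpose_apply, hV, mul_comm (w j _)]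
    linarith [hincrement j]
  have hZ := eq_inv_mulVec_of_eq_transpose_mulVec_add hV1 hdet ha
  refine ⟨hZ, ?_⟩
  rw [hψ, ← hZ, sum_eq_card_mul_of_eq_transpose_mulVec_add hV1 ha, Fintype.card_fin]
  field_simp
  push_cast
  ring

theorem stmt10_general (N d : ℕ) (v : Fin d → (Fin d → ℝ))
    (hspan : Submodule.span ℝ (Set.range v) = ⊤)
    (w : Fin (d + 1) → (Fin d → ℝ))
    (hw0 : w 0 = -(∑ k, v k)) (hws : ∀ k : Fin d, w k.succ = v k)
    (V : Matrix (Fin d) (Fin (d + 1)) ℝ) (hV : ∀ k i, V k i = w i k)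
    (f : Fin N → (Fin d → ℝ) → (Fin d → ℝ) → ℝ) (h : (Fin d → ℝ) → ℝ)
    (u : Fin (N + 1) → (Fin d → ℝ) → ℝ)
    (huN : u (Fin.last N) = h)
    (hurec : ∀ (n : Fin N) (x : Fin d → ℝ),
      u n.castSucc x = u n.succ x
        + (1 / ((d : ℝ) + 1)) * ∑ j, (u n.succ (x + w j) - u n.succ x)
        + f n x ((V * Vᵀ)⁻¹.mulVec
            (V.mulVec (fun j => u n.succ (x + w j) - u n.succ x))))
    (Y : Fin (N + 1) → PathSp N d → ℝ) (Z : Fin N → PathSp N d → (Fin d → ℝ))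
    (hYad : ∀ n : Fin (N + 1), MeasUpTo (n : ℕ) (Y n))
    (hZpred : ∀ n : Fin N, MeasUpTo (n : ℕ) (Z n))
    (hterm : ∀ ω, Y (Fin.last N) ω = h (Xproc w (Fin.last N) ω))
    (heq : ∀ (n : Fin N) (ω : PathSp N d),
      Y n.succ ω - Y n.castSucc ω
        = -(f n (Xproc w n.castSucc ω) (Z n ω)) + ∑ k, Z n ω k * w (ω n) k) :
    (∀ (n : Fin (N + 1)) (ω : PathSp N d), Y n ω = u n (Xproc w n ω)) ∧
    (∀ (n : Fin N) (ω : PathSp N d),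
      Z n ω = (V * Vᵀ)⁻¹.mulVec (V.mulVec
        (fun j => u n.succ (Xproc w n.castSucc ω + w j)
          - u n.succ (Xproc w n.castSucc ω)))) := by
  have hw : ∑ i, w i = 0 := by simp [Fin.sum_univ_succ, hw0, hws]
  have hV1 : V *ᵥ 1 = 0 := by
    funext k
    simp [mulVec, dotProduct, hV, ← Finset.sum_apply, hw]
  have hdet : IsUnit (V * Vᵀ).det := by
    have hcol : V.col = w := funext fun i => funext fun k => hV k i
    refine isUnit_det_mul_transpose_of_span_col_eq_top (eq_top_iff.2 ?_)
    rw [← hspan, hcol]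
    exact Submodule.span_mono (by rintro _ ⟨k, rfl⟩; exact ⟨k.succ, hws k⟩)
  have step := fun n hY => feynmanKac_backward_step hV hV1 hdet n (f n) (u n.succ) (u n.castSucc)
    (hurec n) (Y n.castSucc) (Y n.succ) (Z n) (hYad n.castSucc) (hZpred n) hY (heq n)
  have hY : ∀ n ω, Y n ω = u n (Xproc w n ω) := by
    intro n
    induction n using Fin.reverseInduction with
    | last => intro ω; rw [hterm, huN]
    | cast n ih => exact fun ω => (step n ih ω).2
  exact ⟨hY, fun n ω => (step n (hY n.succ) ω).1⟩

/-- nonlinear Feynman–Kac: with `g_n(z) = f_n(X_{n-1}, z)`,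
terminal value `h(X_N)`, and `u_n` defined backward by
`u_{n-1}(x) = u_n(x) + 𝓛 u_n(x) + f_n(x, (v vᵀ)⁻¹ v 𝓝 u_n(x))`,
the unique BSΔE solution is `Y_n = u_n(X_n)`, `Z_{n+1} = (v vᵀ)⁻¹ v 𝓝 u_{n+1}(X_n)`. -/
theorem stmt10 (N d : ℕ) (v : Fin d → (Fin d → ℝ)) (hv : LinearIndependent ℝ v)
    (hspan : Submodule.span ℝ (Set.range v) = ⊤)
    (w : Fin (d + 1) → (Fin d → ℝ))
    (hw0 : w 0 = -(∑ k, v k)) (hws : ∀ k : Fin d, w k.succ = v k)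
    (V : Matrix (Fin d) (Fin (d + 1)) ℝ) (hV : ∀ k i, V k i = w i k)
    (f : Fin N → (Fin d → ℝ) → (Fin d → ℝ) → ℝ) (h : (Fin d → ℝ) → ℝ)
    (u : Fin (N + 1) → (Fin d → ℝ) → ℝ)
    (huN : u (Fin.last N) = h)
    (hurec : ∀ (n : Fin N) (x : Fin d → ℝ),
      u n.castSucc x = u n.succ x
        + (1 / ((d : ℝ) + 1)) * ∑ j, (u n.succ (x + w j) - u n.succ x)
        + f n x ((V * Vᵀ)⁻¹.mulVec
            (V.mulVec (fun j => u n.succ (x + w j) - u n.succ x))))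
    (Y : Fin (N + 1) → PathSp N d → ℝ) (Z : Fin N → PathSp N d → (Fin d → ℝ))
    (hYad : ∀ n : Fin (N + 1), MeasUpTo (n : ℕ) (Y n))
    (hZpred : ∀ n : Fin N, MeasUpTo (n : ℕ) (Z n))
    (hterm : ∀ ω, Y (Fin.last N) ω = h (Xproc w (Fin.last N) ω))
    (heq : ∀ (n : Fin N) (ω : PathSp N d),
      Y n.succ ω - Y n.castSucc ω
        = -(f n (Xproc w n.castSucc ω) (Z n ω)) + ∑ k, Z n ω k * w (ω n) k) :
    (∀ (n : Fin (N + 1)) (ω : PathSp N d), Y n ω = u n (Xproc w n ω)) ∧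
    (∀ (n : Fin N) (ω : PathSp N d),
      Z n ω = (V * Vᵀ)⁻¹.mulVec (V.mulVec
        (fun j => u n.succ (Xproc w n.castSucc ω + w j)
          - u n.succ (Xproc w n.castSucc ω)))) :=
  stmt10_general N d v hspan w hw0 hws V hV f h u huN hurec Y Z hYad hZpred hterm heq
end
end

section
/- (Sup-convolution of entropic drivers) Let α, β > 0, γ = 1/(1/α + 1/β), p_j, q_j > 0 for j = 0,...,d, and z ∈ R^d. Then sup over x ∈ R^d of [ -(1/α) log Σ_j e^{-α x^T v_j} p_j - (1/β) log Σ_j e^{-β (z-x)^T v_j} q_j ] equals -(1/γ) log Σ_j e^{-γ z^T v_j} p_j^{γ/α} q_j^{γ/β}. -/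
/-!
Write `y_j = xᵀw_j` and `s_j = zᵀw_j`, so that the objective is `D_α(p, y) + D_β(q, s - y)`
for the entropic driver `D_α(p, y) = -(1/α) log Σ_j e^{-α y_j} p_j`. Since `γ/α + γ/β = 1`,
Hölder's inequality with exponents `α/γ` and `β/γ` bounds this by `D_γ(p^{γ/α} q^{γ/β}, s)`
for every `y`, with equality as soon as `(α + β) y_j - β s_j - log p_j + log q_j` does not
depend on `j`. As `w_0 + ⋯ + w_d = 0` and the `v_k` are linearly independent, the vectors
`(xᵀw_j)_j` are exactly those with coordinate sum zero, and choosing the constant to be the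
mean makes the equality case such a vector.
-/

open Finset Real Matrix

theorem sum_rpow_mul_rpow_le {ι : Type*} (s : Finset ι) {A B : ι → ℝ}
    (hA : ∀ i ∈ s, 0 ≤ A i) (hB : ∀ i ∈ s, 0 ≤ B i) {θ η : ℝ} (hθ : 0 < θ) (hη : 0 < η)
    (hθη : θ + η = 1) :
    ∑ i ∈ s, A i ^ θ * B i ^ η ≤ (∑ i ∈ s, A i) ^ θ * (∑ i ∈ s, B i) ^ η := by
  have holder := inner_le_Lp_mul_Lq_of_nonneg s (HolderConjugate.inv_inv hθ hη hθη)
    (fun i hi => rpow_nonneg (hA i hi) θ) (fun i hi => rpow_nonneg (hB i hi) η)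
  rwa [one_div, one_div, inv_inv, inv_inv,
    sum_congr rfl fun i hi => rpow_rpow_inv (hA i hi) hθ.ne',
    sum_congr rfl fun i hi => rpow_rpow_inv (hB i hi) hη.ne'] at holder

noncomputable def entropicDriver {ι : Type*} [Fintype ι] (α : ℝ) (p y : ι → ℝ) : ℝ :=
  -(1 / α) * log (∑ j, exp (-(α * y j)) * p j)

section EntropicDriver

variable {ι : Type*} [Fintype ι] [Nonempty ι] {α β γ : ℝ} {p q : ι → ℝ}

theorem entropicDriver_add_sub_le (hα : 0 < α) (hβ : 0 < β) (hγ : γ = 1 / (1 / α + 1 / β))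
    (hp : ∀ j, 0 < p j) (hq : ∀ j, 0 < q j) (s y : ι → ℝ) :
    entropicDriver α p y + entropicDriver β q (s - y)
      ≤ entropicDriver γ (fun j => p j ^ (γ / α) * q j ^ (γ / β)) s := by
  have hγpos : 0 < γ := by rw [hγ]; positivity
  set A : ι → ℝ := fun j => exp (-(α * y j)) * p j
  set B : ι → ℝ := fun j => exp (-(β * (s - y) j)) * q j
  have hA : ∀ j, 0 < A j := fun j => mul_pos (exp_pos _) (hp j)
  have hB : ∀ j, 0 < B j := fun j => mul_pos (exp_pos _) (hq j)
  have hsumA : 0 < ∑ j, A j := sum_pos (fun j _ => hA j) univ_nonempty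
  have hsumB : 0 < ∑ j, B j := sum_pos (fun j _ => hB j) univ_nonempty
  have hpow : ∀ j, A j ^ (γ / α) * B j ^ (γ / β)
      = exp (-(γ * s j)) * (p j ^ (γ / α) * q j ^ (γ / β)) := by
    intro j
    rw [mul_rpow (exp_pos _).le (hp j).le, mul_rpow (exp_pos _).le (hq j).le, ← exp_mul,
      ← exp_mul, mul_mul_mul_comm, ← exp_add]
    congr 2
    simp only [Pi.sub_apply]
    field_simp
    ring
  have holder : ∑ j, exp (-(γ * s j)) * (p j ^ (γ / α) * q j ^ (γ / β))
      ≤ (∑ j, A j) ^ (γ / α) * (∑ j, B j) ^ (γ / β) := by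
    simp only [← hpow]
    exact sum_rpow_mul_rpow_le _ (fun j _ => (hA j).le) (fun j _ => (hB j).le) (by positivity)
      (by positivity) (by rw [hγ]; field_simp)
  have hlog := log_le_log (sum_pos (fun j _ => mul_pos (exp_pos _)
    (mul_pos (rpow_pos_of_pos (hp j) _) (rpow_pos_of_pos (hq j) _))) univ_nonempty) holder
  rw [log_mul (rpow_pos_of_pos hsumA _).ne' (rpow_pos_of_pos hsumB _).ne', log_rpow hsumA,
    log_rpow hsumB] at hlog
  calc entropicDriver α p y + entropicDriver β q (s - y)
      = -(1 / γ) * (γ / α * log (∑ j, A j) + γ / β * log (∑ j, B j)) := by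
        unfold entropicDriver; field_simp; ring
    _ ≤ _ := mul_le_mul_of_nonpos_left hlog (by simp [hγpos.le])

theorem entropicDriver_add_sub_eq (hα : 0 < α) (hβ : 0 < β) (hγ : γ = 1 / (1 / α + 1 / β))
    (hp : ∀ j, 0 < p j) (hq : ∀ j, 0 < q j) (s y : ι → ℝ) (c : ℝ)
    (hy : ∀ j, (α + β) * y j = β * s j + log (p j) - log (q j) - c) :
    entropicDriver α p y + entropicDriver β q (s - y)
      = entropicDriver γ (fun j => p j ^ (γ / α) * q j ^ (γ / β)) s := by
  have hαβ : α + β ≠ 0 := by positivity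
  set T : ι → ℝ := fun j => exp (-(γ * s j)) * (p j ^ (γ / α) * q j ^ (γ / β))
  have hT : ∀ j, T j = exp (-(γ * s j) + γ / α * log (p j) + γ / β * log (q j)) := by
    intro j
    simp only [T, rpow_def_of_pos (hp j), rpow_def_of_pos (hq j), exp_add]
    ring_nf
  have hy' : ∀ j, y j = (β * s j + log (p j) - log (q j) - c) / (α + β) := fun j => by
    rw [← hy j, mul_div_cancel_left₀ _ hαβ]
  have hA : ∀ j, exp (-(α * y j)) * p j = exp (α * c / (α + β)) * T j := by
    intro j
    conv_lhs => rw [← exp_log (hp j)]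
    rw [hT, ← exp_add, ← exp_add, hy' j, hγ]
    congr 1
    field_simp
    ring
  have hB : ∀ j, exp (-(β * (s - y) j)) * q j = exp (-(β * c / (α + β))) * T j := by
    intro j
    conv_lhs => rw [← exp_log (hq j)]
    rw [hT, ← exp_add, ← exp_add, Pi.sub_apply, hy' j, hγ]
    congr 1
    field_simp
    ring
  have hS : ∑ j, T j ≠ 0 := (sum_pos (fun j _ => by rw [hT]; exact exp_pos _) univ_nonempty).ne'
  change -(1 / α) * log (∑ j, exp (-(α * y j)) * p j)
      + -(1 / β) * log (∑ j, exp (-(β * (s - y) j)) * q j) = -(1 / γ) * log (∑ j, T j)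
  simp only [hA, hB, ← mul_sum, log_mul (exp_ne_zero _) hS, log_exp]
  rw [hγ]
  field_simp
  ring

end EntropicDriver

theorem exists_dotProduct_eq_of_linearIndependent {K : Type*} [Field K] {n : Type*} [Fintype n]
    [DecidableEq n] {v : n → n → K} (hv : LinearIndependent K v) (c : n → K) :
    ∃ x : n → K, ∀ k, x ⬝ᵥ v k = c k := by
  have hunit : IsUnit (Matrix.of v) := linearIndependent_rows_iff_isUnit.mp hv
  obtain ⟨x, hx⟩ := mulVec_surjective_iff_isUnit.mpr hunit c
  exact ⟨x, fun k => by rw [dotProduct_comm, ← hx]; rfl⟩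

theorem exists_dotProduct_eq_of_sum_eq_zero {K : Type*} [Field K] {d : ℕ}
    {v : Fin d → Fin d → K} (hv : LinearIndependent K v) {w : Fin (d + 1) → Fin d → K}
    (hw0 : w 0 = -∑ k, v k) (hws : ∀ k, w k.succ = v k) {y : Fin (d + 1) → K}
    (hy : ∑ j, y j = 0) : ∃ x : Fin d → K, ∀ j, x ⬝ᵥ w j = y j := by
  obtain ⟨x, hx⟩ := exists_dotProduct_eq_of_linearIndependent hv fun k => y k.succ
  refine ⟨x, Fin.cases ?_ fun k => by rw [hws, hx]⟩
  rw [Fin.sum_univ_succ, add_eq_zero_iff_eq_neg] at hy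
  rw [hw0, dotProduct_neg, dotProduct_sum, hy]
  simp only [hx]

theorem sum_sub_average_eq_zero {ι : Type*} [Fintype ι] [Nonempty ι] (f : ι → ℝ) :
    ∑ j, (f j - (∑ i, f i) / Fintype.card ι) = 0 := by
  rw [sum_sub_distrib, sum_const, card_univ, nsmul_eq_mul,
    mul_div_cancel₀ _ (Nat.cast_ne_zero.mpr Fintype.card_ne_zero), sub_self]

theorem stmt17_general (d : ℕ) (v : Fin d → (Fin d → ℝ)) (hv : LinearIndependent ℝ v)
    (w : Fin (d + 1) → (Fin d → ℝ))
    (hw0 : w 0 = -(∑ k, v k)) (hws : ∀ k : Fin d, w k.succ = v k)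
    (α β γ : ℝ) (hα : 0 < α) (hβ : 0 < β) (hγ : γ = 1 / (1 / α + 1 / β))
    (p q : Fin (d + 1) → ℝ) (hp : ∀ j, 0 < p j) (hq : ∀ j, 0 < q j)
    (z : Fin d → ℝ) :
    sSup (Set.range fun x : Fin d → ℝ =>
        -(1 / α) * Real.log (∑ j, Real.exp (-(α * ∑ k, x k * w j k)) * p j)
          - (1 / β) * Real.log (∑ j, Real.exp (-(β * ∑ k, (z k - x k) * w j k)) * q j))
      = -(1 / γ) * Real.log
          (∑ j, Real.exp (-(γ * ∑ k, z k * w j k)) * p j ^ (γ / α) * q j ^ (γ / β)) := by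
  set s : Fin (d + 1) → ℝ := fun j => z ⬝ᵥ w j
  have hsplit : ∀ x : Fin d → ℝ,
      -(1 / α) * log (∑ j, exp (-(α * ∑ k, x k * w j k)) * p j)
          - (1 / β) * log (∑ j, exp (-(β * ∑ k, (z k - x k) * w j k)) * q j)
        = entropicDriver α p (fun j => x ⬝ᵥ w j)
          + entropicDriver β q (s - fun j => x ⬝ᵥ w j) := by
    intro x
    have hsub : s - (fun j => x ⬝ᵥ w j) = fun j => (z - x) ⬝ᵥ w j :=
      funext fun j => (sub_dotProduct z x (w j)).symm
    rw [hsub, entropicDriver, entropicDriver, sub_eq_add_neg, ← neg_mul]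
    rfl
  have hbound :
      -(1 / γ) * log (∑ j, exp (-(γ * ∑ k, z k * w j k)) * p j ^ (γ / α) * q j ^ (γ / β))
        = entropicDriver γ (fun j => p j ^ (γ / α) * q j ^ (γ / β)) s := by
    simp only [entropicDriver, mul_assoc]; rfl
  set μ : Fin (d + 1) → ℝ := fun j => β * s j + log (p j) - log (q j)
  set c := (∑ j, μ j) / Fintype.card (Fin (d + 1))
  have hcentered : ∑ j, (μ j - c) / (α + β) = 0 := by
    rw [← sum_div, sum_sub_average_eq_zero, zero_div]
  obtain ⟨x, hx⟩ := exists_dotProduct_eq_of_sum_eq_zero hv hw0 hws hcentered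
  rw [hbound]
  refine IsGreatest.csSup_eq ⟨⟨x, ?_⟩, ?_⟩
  · refine (hsplit x).trans (entropicDriver_add_sub_eq hα hβ hγ hp hq s _ c fun j => ?_)
    rw [hx, mul_div_cancel₀ _ (by positivity)]
  · rintro _ ⟨x, rfl⟩
    exact (hsplit x).trans_le (entropicDriver_add_sub_le hα hβ hγ hp hq s _)

/-- sup-convolution of entropic drivers, Lemma A.1:
`sup_x { -(1/α) log Σ_j e^{-α xᵀv_j} p_j - (1/β) log Σ_j e^{-β (z-x)ᵀv_j} q_j }`
`= -(1/γ) log Σ_j e^{-γ zᵀv_j} p_j^{γ/α} q_j^{γ/β}` with `γ = 1/(1/α + 1/β)`. -/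
theorem stmt17 (d : ℕ) (v : Fin d → (Fin d → ℝ)) (hv : LinearIndependent ℝ v)
    (hspan : Submodule.span ℝ (Set.range v) = ⊤)
    (w : Fin (d + 1) → (Fin d → ℝ))
    (hw0 : w 0 = -(∑ k, v k)) (hws : ∀ k : Fin d, w k.succ = v k)
    (α β γ : ℝ) (hα : 0 < α) (hβ : 0 < β) (hγ : γ = 1 / (1 / α + 1 / β))
    (p q : Fin (d + 1) → ℝ) (hp : ∀ j, 0 < p j) (hq : ∀ j, 0 < q j)
    (z : Fin d → ℝ) :
    sSup (Set.range fun x : Fin d → ℝ =>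
        -(1 / α) * Real.log (∑ j, Real.exp (-(α * ∑ k, x k * w j k)) * p j)
          - (1 / β) * Real.log (∑ j, Real.exp (-(β * ∑ k, (z k - x k) * w j k)) * q j))
      = -(1 / γ) * Real.log
          (∑ j, Real.exp (-(γ * ∑ k, z k * w j k)) * p j ^ (γ / α) * q j ^ (γ / β)) :=
  stmt17_general d v hv w hw0 hws α β γ hα hβ hγ p q hp hq z
end

section
/- (Exponential-utility maximizer formula) Let G > 0, P̂ = (P̂_0,...,P̂_d) with all P̂_j > 0 and Σ_j P̂_j = 1, and g(z) = -(1/G) log Σ_{j=0}^d e^{-G z^T v_j} P̂_j. Then g attains its maximum over R^d uniquely at Z† = (1/G)(v v^T)^{-1} v log P̂ (componentwise log), and the maximal value satisfies g(Z†) = (1/G) D_KL(Q || P̂) where Q = (1/(d+1),...,1/(d+1)) and D_KL is the Kullback–Leibler divergence on the simplex. -/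
/-!
Let `w_0 = -(v_1 + ⋯ + v_d)` and `w_k = v_k`. Since `∑ w_j = 0` and the `v_k` form a basis,
`z ↦ (w_j ⬝ z)_j` is an isomorphism of `ℝ^d` onto the zero-sum vectors, so `Z†` is the point with
`G (w_j ⬝ Z†) = log P̂_j - m`, `m` the mean of `log P̂`. Then
`∑_j e^{-G (z ⬝ w_j)} P̂_j = e^m ∑_j e^{b_j}` with `b_j = G (w_j ⬝ (Z† - z))` summing to zero, and
by `e^x ≥ 1 + x` such a sum is at least `d + 1`, with equality only for `b = 0`, i.e. `z = Z†`.
-/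

open Matrix

namespace Real

variable {ι : Type*} [Fintype ι]

theorem card_le_sum_exp_of_sum_eq_zero {b : ι → ℝ} (hb : ∑ i, b i = 0) :
    (Fintype.card ι : ℝ) ≤ ∑ i, exp (b i) :=
  calc (Fintype.card ι : ℝ) = ∑ i, (b i + 1) := by simp [Finset.sum_add_distrib, hb]
    _ ≤ ∑ i, exp (b i) := Finset.sum_le_sum fun i _ => add_one_le_exp (b i)

theorem eq_zero_of_sum_exp_eq_card {b : ι → ℝ} (hb : ∑ i, b i = 0)
    (h : ∑ i, exp (b i) = Fintype.card ι) : b = 0 := by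
  have hgap : ∑ i, (exp (b i) - (b i + 1)) = 0 := by
    simp [Finset.sum_sub_distrib, Finset.sum_add_distrib, hb, h]
  rw [Finset.sum_eq_zero_iff_of_nonneg fun i _ => sub_nonneg.mpr (add_one_le_exp (b i))] at hgap
  funext i
  by_contra hi
  exact (sub_pos.mpr (add_one_lt_exp hi)).ne' (hgap i (Finset.mem_univ i))

end Real

namespace Matrix

theorem inv_transpose_mul_self_mulVec_transpose_mulVec {K m n : Type*} [Field K] [LinearOrder K]
    [IsStrictOrderedRing K] [Fintype m] [Fintype n] [DecidableEq n] {A : Matrix m n K}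
    (hA : Function.Injective A.mulVec) (x : n → K) :
    (Aᵀ * A)⁻¹ *ᵥ (Aᵀ *ᵥ (A *ᵥ x)) = x := by
  have hinj : Function.Injective (Aᵀ * A).mulVecLin := by
    rwa [← LinearMap.ker_eq_bot, ker_mulVecLin_transpose_mul_self, LinearMap.ker_eq_bot]
  have hU : IsUnit (Aᵀ * A) := mulVec_injective_iff_isUnit.mp hinj
  rw [mulVec_mulVec x Aᵀ A, mulVec_mulVec,
    nonsing_inv_mul _ ((isUnit_iff_isUnit_det _).mp hU), one_mulVec]

end Matrix

def simplexFrame {M : Type*} [AddCommGroup M] {d : ℕ} (v : Fin d → M) : Fin (d + 1) → M :=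
  Fin.cons (-∑ k, v k) v

section SimplexFrame

variable {d : ℕ}

theorem sum_simplexFrame {M : Type*} [AddCommGroup M] (v : Fin d → M) :
    ∑ j, simplexFrame v j = 0 := by
  simp [Fin.sum_univ_succ, simplexFrame]

variable {R : Type*} [CommRing R]

theorem sum_simplexFrame_dotProduct (v : Fin d → Fin d → R) (x : Fin d → R) :
    ∑ j, simplexFrame v j ⬝ᵥ x = 0 := by
  rw [← sum_dotProduct, sum_simplexFrame, zero_dotProduct]

theorem transpose_of_simplexFrame_mulVec_one (v : Fin d → Fin d → R) :
    (of (simplexFrame v))ᵀ *ᵥ 1 = 0 := by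
  ext k
  simpa [mulVec, dotProduct] using congrFun (sum_simplexFrame v) k

theorem of_simplexFrame_mulVec_injective {v : Fin d → Fin d → R} (hv : IsUnit (of v)) :
    Function.Injective (of (simplexFrame v)).mulVec := fun _ _ h =>
  mulVec_injective_of_isUnit hv <| funext fun k => congrFun h k.succ

theorem exists_of_simplexFrame_mulVec_eq {v : Fin d → Fin d → R} (hv : IsUnit (of v))
    {c : Fin (d + 1) → R} (hc : ∑ j, c j = 0) : ∃ z, of (simplexFrame v) *ᵥ z = c := by
  obtain ⟨z, hz⟩ := mulVec_surjective_iff_isUnit.mpr hv fun k => c k.succ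
  refine ⟨z, funext fun j => Fin.cases ?_ (fun k => congrFun hz k) j⟩
  rw [Fin.sum_univ_succ] at hc
  have hz' : ∀ k, v k ⬝ᵥ z = c k.succ := fun k => congrFun hz k
  show simplexFrame v 0 ⬝ᵥ z = c 0
  rw [simplexFrame, Fin.cons_zero, neg_dotProduct, sum_dotProduct,
    Finset.sum_congr rfl fun k _ => hz' k]
  linear_combination -hc

end SimplexFrame

/-- The range of `W = of (simplexFrame v)` is the zero-sum hyperplane and `Wᵀ 1 = 0`, so the
least-squares fit of `c` by `W` is `c` minus its mean. -/
theorem of_simplexFrame_mulVec_leastSquares_eq_sub_mean {K : Type*} [Field K] [LinearOrder K]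
    [IsStrictOrderedRing K] {d : ℕ} {v : Fin d → Fin d → K} (hv : IsUnit (of v))
    (c : Fin (d + 1) → K) :
    of (simplexFrame v) *ᵥ
        (((of (simplexFrame v))ᵀ * of (simplexFrame v))⁻¹ *ᵥ ((of (simplexFrame v))ᵀ *ᵥ c)) =
      fun j => c j - (∑ i, c i) / (d + 1) := by
  set W := of (simplexFrame v)
  set m := (∑ i, c i) / (d + 1)
  have hcentered : ∑ j, (c j - m) = 0 := by
    simp only [m, Finset.sum_sub_distrib, Finset.sum_const, Finset.card_univ, Fintype.card_fin,
      nsmul_eq_mul]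
    push_cast
    field_simp
    ring
  obtain ⟨z, hz⟩ := exists_of_simplexFrame_mulVec_eq hv hcentered
  have hc : c = W *ᵥ z + m • 1 := by
    rw [hz]; ext; simp
  have hWc : Wᵀ *ᵥ c = Wᵀ *ᵥ (W *ᵥ z) := by
    rw [hc, mulVec_add, mulVec_smul, transpose_of_simplexFrame_mulVec_one, smul_zero, add_zero]
  rw [hWc, inv_transpose_mul_self_mulVec_transpose_mulVec (of_simplexFrame_mulVec_injective hv),
    hz]

theorem natCast_add_one_le_sum_exp_simplexFrame_dotProduct {d : ℕ} (v : Fin d → Fin d → ℝ)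
    (x : Fin d → ℝ) : (d : ℝ) + 1 ≤ ∑ j, Real.exp (simplexFrame v j ⬝ᵥ x) := by
  simpa using Real.card_le_sum_exp_of_sum_eq_zero (sum_simplexFrame_dotProduct v x)

theorem eq_zero_of_sum_exp_simplexFrame_dotProduct_eq {d : ℕ} {v : Fin d → Fin d → ℝ}
    (hv : IsUnit (of v)) {x : Fin d → ℝ}
    (h : ∑ j, Real.exp (simplexFrame v j ⬝ᵥ x) = d + 1) : x = 0 := by
  have hWx : of (simplexFrame v) *ᵥ x = 0 :=
    Real.eq_zero_of_sum_exp_eq_card (sum_simplexFrame_dotProduct v x) (by simpa [mulVec] using h)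
  exact (of_simplexFrame_mulVec_injective hv).eq_iff' (mulVec_zero _) |>.mp hWx

theorem sum_exp_neg_mul_dotProduct_mul_eq {ι n : Type*} [Fintype ι] [Fintype n]
    {w : ι → n → ℝ} {P : ι → ℝ} (hP : ∀ j, 0 < P j) {G m : ℝ} {Z : n → ℝ}
    (hZ : ∀ j, G * (w j ⬝ᵥ Z) = Real.log (P j) - m) (z : n → ℝ) :
    ∑ j, Real.exp (-(G * (z ⬝ᵥ w j))) * P j =
      Real.exp m * ∑ j, Real.exp (w j ⬝ᵥ (G • (Z - z))) := by
  rw [Finset.mul_sum]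
  refine Finset.sum_congr rfl fun j _ => ?_
  rw [← Real.exp_log (hP j), ← Real.exp_add, ← Real.exp_add, dotProduct_smul, dotProduct_sub,
    dotProduct_comm z, smul_eq_mul]
  congr 1
  linear_combination -hZ j

theorem sum_uniform_mul_log_uniform_div {ι : Type*} [Fintype ι] [Nonempty ι] {p : ι → ℝ}
    (hp : ∀ i, 0 < p i) :
    ∑ i, 1 / (Fintype.card ι : ℝ) * Real.log (1 / Fintype.card ι / p i) =
      -(Real.log (Fintype.card ι) + (∑ i, Real.log (p i)) / Fintype.card ι) := by
  have hn : (0 : ℝ) < Fintype.card ι := Nat.cast_pos.mpr Fintype.card_pos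
  have hlog : ∀ i, Real.log (1 / Fintype.card ι / p i) =
      -Real.log (Fintype.card ι) - Real.log (p i) := fun i => by
    rw [Real.log_div (one_div_pos.mpr hn).ne' (hp i).ne', one_div, Real.log_inv]
  simp only [hlog, ← Finset.mul_sum, Finset.sum_sub_distrib, Finset.sum_const, Finset.card_univ,
    nsmul_eq_mul]
  field_simp
  ring

theorem stmt19_general (d : ℕ) (v : Fin d → (Fin d → ℝ)) (hv : LinearIndependent ℝ v)
    (w : Fin (d + 1) → (Fin d → ℝ))
    (hw0 : w 0 = -(∑ k, v k)) (hws : ∀ k : Fin d, w k.succ = v k)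
    (V : Matrix (Fin d) (Fin (d + 1)) ℝ) (hV : ∀ k i, V k i = w i k)
    (G : ℝ) (hG : 0 < G)
    (Phat : Fin (d + 1) → ℝ) (hp : ∀ j, 0 < Phat j)
    (g : (Fin d → ℝ) → ℝ)
    (hgdef : ∀ z, g z
      = -(1 / G) * Real.log (∑ j, Real.exp (-(G * ∑ k, z k * w j k)) * Phat j))
    (Zd : Fin d → ℝ)
    (hZd : Zd = (1 / G) • ((V * Vᵀ)⁻¹.mulVec (V.mulVec fun j => Real.log (Phat j)))) :
    (∀ z, g z ≤ g Zd) ∧ (∀ z, g z = g Zd → z = Zd) ∧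
      g Zd = (1 / G) * ∑ j, (1 / ((d : ℝ) + 1)) *
        Real.log ((1 / ((d : ℝ) + 1)) / Phat j) := by
  have hvU : IsUnit (of v) := linearIndependent_rows_iff_isUnit.mp hv
  obtain rfl : w = simplexFrame v := funext fun j => Fin.cases hw0 hws j
  obtain rfl : V = (of (simplexFrame v))ᵀ := by ext k i; exact hV k i
  set m := (∑ j, Real.log (Phat j)) / ((d : ℝ) + 1)
  have hZd_frame : ∀ j, G * (simplexFrame v j ⬝ᵥ Zd) = Real.log (Phat j) - m := fun j => by
    rw [hZd, transpose_transpose, dotProduct_smul, smul_eq_mul, ← mul_assoc,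
      mul_one_div_cancel hG.ne', one_mul]
    exact congrFun (of_simplexFrame_mulVec_leastSquares_eq_sub_mean hvU _) j
  set S : (Fin d → ℝ) → ℝ := fun z => ∑ j, Real.exp (simplexFrame v j ⬝ᵥ (G • (Zd - z)))
  have hS_pos : ∀ z, 0 < S z := fun z => by positivity
  have hg : ∀ z, g z = -(m + Real.log (S z)) / G := fun z => by
    have hgdef_z : g z = -(1 / G) *
        Real.log (∑ j, Real.exp (-(G * (z ⬝ᵥ simplexFrame v j))) * Phat j) := hgdef z
    rw [hgdef_z, sum_exp_neg_mul_dotProduct_mul_eq hp hZd_frame,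
      Real.log_mul (Real.exp_pos m).ne' (hS_pos z).ne', Real.log_exp]
    ring
  have hS_Zd : S Zd = d + 1 := by simp [S]
  refine ⟨fun z => ?_, fun z hz => ?_, ?_⟩
  · rw [hg, hg, hS_Zd]
    gcongr
    exact natCast_add_one_le_sum_exp_simplexFrame_dotProduct v _
  · rw [hg, hg, div_left_inj' hG.ne', neg_inj, add_right_inj] at hz
    have hS : S z = d + 1 := hS_Zd ▸ Real.log_injOn_pos (hS_pos z) (hS_pos Zd) hz
    have hx := eq_zero_of_sum_exp_simplexFrame_dotProduct_eq hvU hS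
    rw [smul_eq_zero, sub_eq_zero] at hx
    exact (hx.resolve_left hG.ne').symm
  · have hKL := sum_uniform_mul_log_uniform_div hp
    simp only [Fintype.card_fin, Nat.cast_add, Nat.cast_one] at hKL
    rw [hg, hS_Zd, hKL]
    ring

/-- exponential-utility maximizer: the entropic driver
`g(z) = -(1/G) log Σ_j e^{-G zᵀv_j} P̂_j` attains its maximum over `ℝ^d` uniquely
at `Z† = (1/G)(v vᵀ)⁻¹ v log P̂`, with maximal value
`g(Z†) = (1/G) D_KL(Q ‖ P̂)`, `Q` the uniform distribution on `{0,...,d}`. -/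
theorem stmt19 (d : ℕ) (v : Fin d → (Fin d → ℝ)) (hv : LinearIndependent ℝ v)
    (hspan : Submodule.span ℝ (Set.range v) = ⊤)
    (w : Fin (d + 1) → (Fin d → ℝ))
    (hw0 : w 0 = -(∑ k, v k)) (hws : ∀ k : Fin d, w k.succ = v k)
    (V : Matrix (Fin d) (Fin (d + 1)) ℝ) (hV : ∀ k i, V k i = w i k)
    (G : ℝ) (hG : 0 < G)
    (Phat : Fin (d + 1) → ℝ) (hp : ∀ j, 0 < Phat j) (hpsum : ∑ j, Phat j = 1)
    (g : (Fin d → ℝ) → ℝ)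
    (hgdef : ∀ z, g z
      = -(1 / G) * Real.log (∑ j, Real.exp (-(G * ∑ k, z k * w j k)) * Phat j))
    (Zd : Fin d → ℝ)
    (hZd : Zd = (1 / G) • ((V * Vᵀ)⁻¹.mulVec (V.mulVec fun j => Real.log (Phat j)))) :
    (∀ z, g z ≤ g Zd) ∧ (∀ z, g z = g Zd → z = Zd) ∧
      g Zd = (1 / G) * ∑ j, (1 / ((d : ℝ) + 1)) *
        Real.log ((1 / ((d : ℝ) + 1)) / Phat j) :=
  stmt19_general d v hv w hw0 hws V hV G hG Phat hp g hgdef Zd hZd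
end
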